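/- arXiv:1308.3210 — 6 statements merged into one kernel-verified Lean document; each statement's English description precedes it below -/
import Mathlib

section
/- Let G be a graph on n vertices with domination number γ(G) > b, where b ≥ 2. If every vertex of G has at most a non-neighbors (vertices distinct from it and not adjacent to it, not counting itself), then C(n,b) ≤ n·C(a,b). -/
def Dominates {V : Type*} (G : SimpleGraph V) (S : Finset V) : Prop :=
  ∀ v ∉ S, ∃ u ∈ S, G.Adj u v

noncomputable def domNum {V : Type*} [Fintype V] (G : SimpleGraph V) : ℕ :=
  sInf {k | ∃ S : Finset V, S.card = k ∧ Dominates G S}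

/-- If `γ(G) > b ≥ 2` and every vertex has at most `a` non-neighbors, then
`C(n,b) ≤ n·C(a,b)`. -/
theorem stmt2 (n b a : ℕ) (hb : 2 ≤ b) (G : SimpleGraph (Fin n))
    [DecidableRel G.Adj] (hdom : b < domNum G)
    (ha : ∀ v : Fin n,
      (Finset.univ.filter (fun u => u ≠ v ∧ ¬ G.Adj u v)).card ≤ a) :
    Nat.choose n b ≤ n * Nat.choose a b := by
  classical
  have key : (Finset.univ.powersetCard b : Finset (Finset (Fin n))) ⊆
      Finset.univ.biUnion (fun v =>
        (Finset.univ.filter (fun u => u ≠ v ∧ ¬ G.Adj u v)).powersetCard b) := by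
    intro S hS
    simp only [Finset.mem_powersetCard] at hS
    have hnd : ¬ Dominates G S := by
      intro h
      have : domNum G ≤ b := Nat.sInf_le ⟨S, hS.2, h⟩
      omega
    unfold Dominates at hnd
    push_neg at hnd
    obtain ⟨v, hv, hvn⟩ := hnd
    simp only [Finset.mem_biUnion]
    refine ⟨v, Finset.mem_univ v, ?_⟩
    rw [Finset.mem_powersetCard]
    refine ⟨?_, hS.2⟩
    intro u hu
    simp only [Finset.mem_filter]
    exact ⟨Finset.mem_univ u, fun h => hv (h ▸ hu), hvn u hu⟩
  calc Nat.choose n b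
      = (Finset.univ.powersetCard b : Finset (Finset (Fin n))).card := by
        rw [Finset.card_powersetCard, Finset.card_univ, Fintype.card_fin]
    _ ≤ _ := Finset.card_le_card key
    _ ≤ ∑ v : Fin n,
          ((Finset.univ.filter (fun u => u ≠ v ∧ ¬ G.Adj u v)).powersetCard b).card :=
        Finset.card_biUnion_le
    _ ≤ ∑ _v : Fin n, Nat.choose a b := by
        apply Finset.sum_le_sum
        intro v _
        rw [Finset.card_powersetCard]
        exact Nat.choose_le_choose b (ha v)
    _ = n * Nat.choose a b := by
        simp [Finset.sum_const, Finset.card_univ]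
end

section
/- Let G be a graph on n vertices with domination number γ(G) > b, b ≥ 2, and suppose n·C(a,b) < C(n,b) for some integer a ≥ b. Then some vertex v of G has at least a+1 vertices u ≠ v that are not adjacent to v, and consequently for every m ≤ a+1 the graph G has at least C(a+1, m) sets of m vertices that do not dominate G. -/
noncomputable def nonDomCount {V : Type*} [Fintype V] (G : SimpleGraph V) (k : ℕ) : ℕ :=
  letI : DecidablePred (fun S : Finset V => Dominates G S) := Classical.decPred _
  ((Finset.powersetCard k Finset.univ).filter (fun S => ¬ Dominates G S)).card

/-- If `γ(G) > b ≥ 2`, `a ≥ b` and `n·C(a,b) < C(n,b)`, then some vertex has at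
least `a+1` non-neighbors, and hence for every `m ≤ a+1` there are at least
`C(a+1,m)` non-dominating `m`-sets. -/
theorem stmt3 (n b a : ℕ) (hb : 2 ≤ b) (hab : b ≤ a) (G : SimpleGraph (Fin n))
    [DecidableRel G.Adj] (hdom : b < domNum G)
    (hlt : n * Nat.choose a b < Nat.choose n b) :
    (∃ v : Fin n,
      a + 1 ≤ (Finset.univ.filter (fun u => u ≠ v ∧ ¬ G.Adj u v)).card) ∧
    ∀ m ≤ a + 1, Nat.choose (a + 1) m ≤ nonDomCount G m := by
  classical
  set Nb : Fin n → Finset (Fin n) :=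
    fun v => Finset.univ.filter (fun u => u ≠ v ∧ ¬ G.Adj u v) with hNb
  have hnondom : ∀ S : Finset (Fin n), ∀ v : Fin n, v ∉ S → (∀ u ∈ S, ¬ G.Adj u v) →
      ¬ Dominates G S := by
    intro S v hv h hD
    obtain ⟨u, hu, hadj⟩ := hD v hv
    exact h u hu hadj
  have hcover : ∀ S : Finset (Fin n), S.card = b → ∃ v, S ⊆ Nb v := by
    intro S hS
    have hnd : ¬ Dominates G S := by
      intro hD
      have : domNum G ≤ b := Nat.sInf_le ⟨S, hS, hD⟩
      omega
    rw [Dominates] at hnd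
    push_neg at hnd
    obtain ⟨v, hv, h⟩ := hnd
    refine ⟨v, fun u hu => ?_⟩
    simp only [hNb, Finset.mem_filter, Finset.mem_univ, true_and]
    exact ⟨fun e => hv (e ▸ hu), h u hu⟩
  -- first part
  have hex : ∃ v : Fin n, a + 1 ≤ (Nb v).card := by
    by_contra hc
    push_neg at hc
    have hsub : Finset.powersetCard b (Finset.univ : Finset (Fin n)) ⊆
        Finset.univ.biUnion (fun v => Finset.powersetCard b (Nb v)) := by
      intro S hS
      rw [Finset.mem_powersetCard] at hS
      obtain ⟨v, hv⟩ := hcover S hS.2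
      exact Finset.mem_biUnion.2 ⟨v, Finset.mem_univ _, Finset.mem_powersetCard.2 ⟨hv, hS.2⟩⟩
    have h1 : Nat.choose n b ≤
        ∑ v : Fin n, (Finset.powersetCard b (Nb v)).card := by
      calc Nat.choose n b = (Finset.powersetCard b (Finset.univ : Finset (Fin n))).card := by
            rw [Finset.card_powersetCard, Finset.card_univ, Fintype.card_fin]
        _ ≤ (Finset.univ.biUnion (fun v => Finset.powersetCard b (Nb v))).card :=
            Finset.card_le_card hsub
        _ ≤ ∑ v : Fin n, (Finset.powersetCard b (Nb v)).card := Finset.card_biUnion_le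
    have h2 : ∑ v : Fin n, (Finset.powersetCard b (Nb v)).card ≤ n * Nat.choose a b := by
      calc ∑ v : Fin n, (Finset.powersetCard b (Nb v)).card
          ≤ ∑ _v : Fin n, Nat.choose a b := by
            apply Finset.sum_le_sum
            intro v _
            rw [Finset.card_powersetCard]
            exact Nat.choose_le_choose b (by have := hc v; omega)
        _ = n * Nat.choose a b := by simp [Finset.sum_const, Finset.card_univ, mul_comm]
    omega
  obtain ⟨v, hv⟩ := hex
  refine ⟨⟨v, hv⟩, ?_⟩
  intro m hm
  have hvnot : v ∉ Nb v := by simp [hNb]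
  have hsub : Finset.powersetCard m (Nb v) ⊆
      (Finset.powersetCard m (Finset.univ : Finset (Fin n))).filter
        (fun S => ¬ Dominates G S) := by
    intro S hS
    rw [Finset.mem_powersetCard] at hS
    refine Finset.mem_filter.2 ⟨Finset.mem_powersetCard.2 ⟨Finset.subset_univ _, hS.2⟩, ?_⟩
    apply hnondom S v (fun h => hvnot (hS.1 h))
    intro u hu
    have := hS.1 hu
    simp only [hNb, Finset.mem_filter] at this
    exact this.2.2
  have hcard : Nat.choose (a + 1) m ≤ (Finset.powersetCard m (Nb v)).card := by
    rw [Finset.card_powersetCard]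
    exact Nat.choose_le_choose m hv
  have := Finset.card_le_card hsub
  unfold nonDomCount
  convert le_trans hcard this using 2
end

section
/- For every fixed integer b ≥ 2 there exists a₀ such that for all integers a, n with a₀ ≤ a < n: if n·C(a,b) ≥ C(n,b), then n·a^b ≥ n^b. -/
/-!
Write `b = c + 1` and suppose `n·a^b < n^b`, i.e. `a^(c+1) < n^c`. Once `a ≥ c^c` this forces
`n > c·a`, hence `(a - 1)/a ≤ (n - c)/n`, and so `a·(a-1)^c < (n-c)^c`. Sandwiching the descending
factorials, `a(a-1)⋯(a-c) ≤ a·(a-1)^c < (n-c)^c ≤ (n-1)⋯(n-c)`, and multiplying by `n/b!` gives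
`n·C(a,b) < C(n,b)`.
-/

namespace Nat

theorem descFactorial_succ_le_mul_pow (a c : ℕ) : a.descFactorial (c + 1) ≤ a * (a - 1) ^ c := by
  cases a with
  | zero => simp
  | succ m =>
    rw [succ_descFactorial_succ]
    exact Nat.mul_le_mul_left _ (descFactorial_le_pow m c)

theorem mul_pred_le_mul_sub_of_mul_le {a c n : ℕ} (h : c * a ≤ n) : n * (a - 1) ≤ a * (n - c) := by
  rw [Nat.mul_sub, Nat.mul_sub, mul_one, mul_comm n a, mul_comm a c]
  omega

theorem descFactorial_succ_lt_descFactorial_pred {a c n : ℕ} (hca : c ^ c ≤ a) (ha : 2 ≤ a)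
    (h : a ^ (c + 1) < n ^ c) : a.descFactorial (c + 1) < (n - 1).descFactorial c := by
  have hn : c * a < n := by
    refine lt_of_pow_lt_pow_left₀ c (Nat.zero_le n) ?_
    calc (c * a) ^ c = c ^ c * a ^ c := mul_pow c a c
      _ ≤ a * a ^ c := by gcongr
      _ = a ^ (c + 1) := (_root_.pow_succ' a c).symm
      _ < n ^ c := h
  have hpow : a * (a - 1) ^ c < (n - c) ^ c := by
    have hpos : 0 < (a - 1) ^ c := Nat.pow_pos (by omega)
    refine Nat.lt_of_mul_lt_mul_left (a := a ^ c) ?_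
    calc a ^ c * (a * (a - 1) ^ c) = a ^ (c + 1) * (a - 1) ^ c := by ring
      _ < n ^ c * (a - 1) ^ c := by gcongr
      _ = (n * (a - 1)) ^ c := (mul_pow n (a - 1) c).symm
      _ ≤ (a * (n - c)) ^ c := Nat.pow_le_pow_left (mul_pred_le_mul_sub_of_mul_le hn.le) c
      _ = a ^ c * (n - c) ^ c := mul_pow a (n - c) c
  calc a.descFactorial (c + 1) ≤ a * (a - 1) ^ c := descFactorial_succ_le_mul_pow a c
    _ < (n - c) ^ c := hpow
    _ = (n - 1 + 1 - c) ^ c := by rw [Nat.sub_add_cancel (by omega)]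
    _ ≤ (n - 1).descFactorial c := pow_sub_le_descFactorial (n - 1) c

theorem pow_le_mul_pow_of_choose_le_mul_choose {a c n : ℕ} (hca : c ^ c ≤ a) (ha : 2 ≤ a)
    (h : n.choose (c + 1) ≤ n * a.choose (c + 1)) : n ^ (c + 1) ≤ n * a ^ (c + 1) := by
  by_contra! hlt
  obtain ⟨m, rfl⟩ : ∃ m, n = m + 1 := exists_eq_succ_of_ne_zero (by rintro rfl; simp at hlt)
  have hpow : a ^ (c + 1) < (m + 1) ^ c := by
    rw [_root_.pow_succ' (m + 1)] at hlt
    exact Nat.lt_of_mul_lt_mul_left hlt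
  have hdesc := descFactorial_succ_lt_descFactorial_pred hca ha hpow
  rw [add_tsub_cancel_right] at hdesc
  have : (c + 1)! * ((m + 1) * a.choose (c + 1)) < (c + 1)! * (m + 1).choose (c + 1) := by
    rw [mul_left_comm, ← descFactorial_eq_factorial_mul_choose,
      ← descFactorial_eq_factorial_mul_choose, succ_descFactorial_succ]
    gcongr
  exact (Nat.lt_of_mul_lt_mul_left this).not_ge h

end Nat

theorem stmt5_general (b : ℕ) :
    ∃ a₀ : ℕ, ∀ a n : ℕ, a₀ ≤ a → a < n →
      Nat.choose n b ≤ n * Nat.choose a b → n ^ b ≤ n * a ^ b := by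
  cases b with
  | zero => exact ⟨0, fun a n _ han _ => by simpa using Nat.one_le_of_lt han⟩
  | succ c =>
    exact ⟨c ^ c + 2, fun a n ha _ h =>
      Nat.pow_le_mul_pow_of_choose_le_mul_choose (by omega) (by omega) h⟩

/-- Lemma 2.3: for fixed `b ≥ 2` and all sufficiently large `a < n`, the
inequality `n·C(a,b) ≥ C(n,b)` implies `n·a^b ≥ n^b`. -/
theorem stmt5 (b : ℕ) (hb : 2 ≤ b) :
    ∃ a₀ : ℕ, ∀ a n : ℕ, a₀ ≤ a → a < n →
      Nat.choose n b ≤ n * Nat.choose a b → n ^ b ≤ n * a ^ b :=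
  stmt5_general b
end

section
/- Let b ≥ 2 and let G be a graph on n vertices with domination number γ(G) > b. If n is sufficiently large (depending only on b), then some vertex of G has at least n^((b-1)/b) non-neighbors, and hence for any m ≤ n^((b-1)/b) the number of non-dominating m-sets in G is at least C(⌈n^((b-1)/b)⌉, m). -/
/-!
If every vertex had fewer than `s = n ^ ((b - 1) / b)` non-neighbours, a greedy choice would
dominate `G` with `b` vertices: by double counting, any set `A` of undominated vertices contains
fewer than `|A| s / n` non-neighbours of some vertex, so adding that vertex shrinks the
undominated set by a factor `s / n`. After `b` steps fewer than `n (s / n) ^ b = 1` vertices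
remain undominated. A vertex `v` with at least `s` non-neighbours then gives the non-dominating
`m`-sets: all `m`-subsets of its non-neighbourhood miss `v`.
-/

open Finset

namespace SimpleGraph

variable {V : Type*} [Fintype V]

lemma domNum_le_of_dominates {G : SimpleGraph V} {S : Finset V} (hS : Dominates G S) :
    domNum G ≤ #S :=
  Nat.sInf_le ⟨S, rfl, hS⟩

variable [DecidableEq V]

lemma sum_card_inter_neighborFinset (H : SimpleGraph V) [DecidableRel H.Adj] (A : Finset V) :
    ∑ v, #(A ∩ H.neighborFinset v) = ∑ u ∈ A, H.degree u := by
  simp_rw [← filter_mem_eq_inter, card_eq_sum_ones, sum_filter]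
  rw [sum_comm]
  refine sum_congr rfl fun u _ => ?_
  simp [← card_neighborFinset_eq_degree, neighborFinset_eq_filter, H.adj_comm]

lemma exists_card_inter_neighborFinset_lt (H : SimpleGraph V) [DecidableRel H.Adj] {s : ℝ}
    (hs : ∀ v, (H.degree v : ℝ) < s) {A : Finset V} (hA : A.Nonempty) :
    ∃ v, (#(A ∩ H.neighborFinset v) : ℝ) < #A * s / Fintype.card V := by
  have : Nonempty V := ⟨hA.choose⟩
  have hsum : ∑ v, (#(A ∩ H.neighborFinset v) : ℝ) < ∑ _v : V, #A * s / Fintype.card V :=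
    calc ∑ v, (#(A ∩ H.neighborFinset v) : ℝ) = ∑ u ∈ A, (H.degree u : ℝ) := by
          exact_mod_cast H.sum_card_inter_neighborFinset A
      _ < ∑ _u ∈ A, s := sum_lt_sum_of_nonempty hA fun u _ => hs u
      _ = ∑ _v : V, #A * s / Fintype.card V := by simp [field]
  simpa using exists_lt_of_sum_lt hsum

variable (G : SimpleGraph V) [DecidableRel G.Adj]

def undominatedFinset (S : Finset V) : Finset V := {u | u ∉ S ∧ ∀ w ∈ S, ¬ G.Adj w u}

@[simp]
lemma undominatedFinset_empty : G.undominatedFinset ∅ = univ := by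
  ext; simp [undominatedFinset]

lemma undominatedFinset_insert_subset (v : V) (S : Finset V) :
    G.undominatedFinset (insert v S) ⊆ G.undominatedFinset S ∩ Gᶜ.neighborFinset v := by
  intro u
  simp only [undominatedFinset, mem_filter, mem_univ, true_and, mem_insert, not_or,
    forall_eq_or_imp, mem_inter, mem_neighborFinset, compl_adj]
  rintro ⟨⟨huv, huS⟩, hvu, hS⟩
  exact ⟨⟨huS, hS⟩, Ne.symm huv, hvu⟩

lemma dominates_of_undominatedFinset_eq_empty {S : Finset V}
    (h : G.undominatedFinset S = ∅) : Dominates G S := by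
  intro u hu
  by_contra! hS
  have : u ∈ G.undominatedFinset S := by simpa [undominatedFinset, hu]
  simp [h] at this

lemma not_dominates_of_subset_neighborFinset_compl {v : V} {S : Finset V}
    (hS : S ⊆ Gᶜ.neighborFinset v) : ¬ Dominates G S := by
  have hv : v ∉ S := fun h => by simpa using hS h
  intro hdom
  obtain ⟨u, hu, huv⟩ := hdom v hv
  exact ((compl_adj G v u).mp (by simpa using hS hu)).2 huv.symm

lemma choose_degree_compl_le_nonDomCount (v : V) (m : ℕ) :
    (Gᶜ.degree v).choose m ≤ nonDomCount G m := by
  rw [← card_neighborFinset_eq_degree, ← card_powersetCard, nonDomCount]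
  refine card_le_card fun S hS => ?_
  rw [mem_powersetCard] at hS
  simp only [mem_filter, mem_powersetCard]
  exact ⟨⟨subset_univ S, hS.2⟩, G.not_dominates_of_subset_neighborFinset_compl hS.1⟩

section Greedy

variable [Nonempty V] {s : ℝ}

lemma exists_card_undominatedFinset_insert_lt (hs : ∀ v, (Gᶜ.degree v : ℝ) < s)
    {S : Finset V} {x : ℝ} (hx : 0 < x) (hS : #(G.undominatedFinset S) ≤ x) :
    ∃ v, (#(G.undominatedFinset (insert v S)) : ℝ) < x * (s / Fintype.card V) := by
  have hs₀ : 0 < s := (Nat.cast_nonneg _).trans_lt (hs (Classical.arbitrary V))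
  rcases (G.undominatedFinset S).eq_empty_or_nonempty with hempty | hne
  · refine ⟨Classical.arbitrary V, ?_⟩
    have := G.undominatedFinset_insert_subset (Classical.arbitrary V) S
    rw [hempty, empty_inter, subset_empty] at this
    rw [this, card_empty, Nat.cast_zero]
    positivity
  · obtain ⟨v, hv⟩ := Gᶜ.exists_card_inter_neighborFinset_lt hs hne
    refine ⟨v, ?_⟩
    calc (#(G.undominatedFinset (insert v S)) : ℝ)
        ≤ #(G.undominatedFinset S ∩ Gᶜ.neighborFinset v) := by
          exact_mod_cast card_le_card (G.undominatedFinset_insert_subset v S)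
      _ < #(G.undominatedFinset S) * s / Fintype.card V := hv
      _ ≤ x * (s / Fintype.card V) := by
          rw [mul_div_assoc]; gcongr

lemma exists_card_le_card_undominatedFinset_lt (hs : ∀ v, (Gᶜ.degree v : ℝ) < s) (j : ℕ) :
    ∃ S : Finset V, #S ≤ j + 1 ∧
      (#(G.undominatedFinset S) : ℝ) < Fintype.card V * (s / Fintype.card V) ^ (j + 1) := by
  have hs₀ : 0 < s := (Nat.cast_nonneg _).trans_lt (hs (Classical.arbitrary V))
  induction j with
  | zero =>
    obtain ⟨v, hv⟩ := G.exists_card_undominatedFinset_insert_lt hs (S := ∅)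
      (x := Fintype.card V) (by positivity) (by simp)
    exact ⟨{v}, by simp, by simpa using hv⟩
  | succ j ih =>
    obtain ⟨S, hS, hund⟩ := ih
    obtain ⟨v, hv⟩ := G.exists_card_undominatedFinset_insert_lt hs (by positivity) hund.le
    refine ⟨insert v S, (card_insert_le v S).trans (by omega), ?_⟩
    rwa [pow_succ _ (j + 1), ← mul_assoc]

end Greedy

lemma domNum_le_of_degree_compl_lt {b : ℕ} (hb : b ≠ 0) {s : ℝ}
    (hs : ∀ v, (Gᶜ.degree v : ℝ) < s)
    (hsb : Fintype.card V * (s / Fintype.card V) ^ b ≤ 1) : domNum G ≤ b := by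
  cases isEmpty_or_nonempty V
  · exact (domNum_le_of_dominates (S := ∅) fun v => isEmptyElim v).trans (by simp)
  obtain ⟨j, rfl⟩ := Nat.exists_eq_add_one_of_ne_zero hb
  obtain ⟨S, hS, hund⟩ := G.exists_card_le_card_undominatedFinset_lt hs j
  have : G.undominatedFinset S = ∅ := by
    rw [← card_eq_zero]
    exact_mod_cast Nat.lt_one_iff.mp (by exact_mod_cast hund.trans_le hsb)
  exact (domNum_le_of_dominates (G.dominates_of_undominatedFinset_eq_empty this)).trans hS

end SimpleGraph

lemma Real.rpow_sub_one_div_pow {x : ℝ} (hx : 0 < x) {b : ℕ} (hb : b ≠ 0) :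
    (x ^ (((b : ℝ) - 1) / b)) ^ b = x ^ b / x := by
  rw [← Real.rpow_mul_natCast hx.le, div_mul_cancel₀ _ (by exact_mod_cast hb),
    Real.rpow_sub_one hx.ne', Real.rpow_natCast]

/-- Theorem 2.2: for `b ≥ 2` and `n` sufficiently large, any graph on `n`
vertices with `γ(G) > b` has a vertex with at least `n^((b-1)/b)` non-neighbors,
and hence at least `C(⌈n^((b-1)/b)⌉, m)` non-dominating `m`-sets for any
`m ≤ n^((b-1)/b)`. -/
theorem stmt8 (b : ℕ) (hb : 2 ≤ b) :
    ∃ N : ℕ, ∀ n : ℕ, N ≤ n → ∀ G : SimpleGraph (Fin n), ∀ _ : DecidableRel G.Adj,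
      b < domNum G →
      (∃ v : Fin n,
        (n : ℝ) ^ (((b : ℝ) - 1) / (b : ℝ)) ≤
          ((Finset.univ.filter (fun u => u ≠ v ∧ ¬ G.Adj u v)).card : ℝ)) ∧
      ∀ m : ℕ, (m : ℝ) ≤ (n : ℝ) ^ (((b : ℝ) - 1) / (b : ℝ)) →
        Nat.choose ⌈(n : ℝ) ^ (((b : ℝ) - 1) / (b : ℝ))⌉₊ m ≤ nonDomCount G m := by
  refine ⟨1, fun n hn G _ hdom => ?_⟩
  set s : ℝ := (n : ℝ) ^ (((b : ℝ) - 1) / (b : ℝ))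
  have hn₀ : (0 : ℝ) < n := by exact_mod_cast hn
  have hb₀ : b ≠ 0 := by omega
  obtain ⟨v, hv⟩ : ∃ v, s ≤ Gᶜ.degree v := by
    by_contra! hs
    have hsb : (Fintype.card (Fin n) : ℝ) * (s / Fintype.card (Fin n)) ^ b = 1 := by
      rw [Fintype.card_fin, div_pow, Real.rpow_sub_one_div_pow hn₀ hb₀]
      field_simp
    exact hdom.not_ge (G.domNum_le_of_degree_compl_lt hb₀ hs hsb.le)
  have hcompl : (Finset.univ.filter fun u => u ≠ v ∧ ¬ G.Adj u v) = Gᶜ.neighborFinset v := by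
    ext u
    simp [G.adj_comm, eq_comm]
  refine ⟨⟨v, by rwa [hcompl, SimpleGraph.card_neighborFinset_eq_degree]⟩, fun m _ => ?_⟩
  exact (Nat.choose_le_choose m (Nat.ceil_le.mpr hv)).trans
    (G.choose_degree_compl_le_nonDomCount v m)
end

section
/- Fix γ ≥ 2 and δ > 0, and set ε_n = ((γ−1+δ)·log n / n)^(1/(γ−1)). Then the probability that G(n, 1−ε_n) has a dominating set of size γ−1 tends to 0 as n → ∞. -/
open MeasureTheory Filter
open scoped ENNReal NNReal

noncomputable def domCount {V : Type*} [Fintype V] (G : SimpleGraph V) (k : ℕ) : ℕ :=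
  letI : DecidablePred (fun S : Finset V => Dominates G S) := Classical.decPred _
  ((Finset.powersetCard k Finset.univ).filter (fun S => Dominates G S)).card

def graphOf {n : ℕ} (σ : Sym2 (Fin n) → Bool) : SimpleGraph (Fin n) where
  Adj i j := i ≠ j ∧ σ s(i, j) = true
  symm := by
    constructor
    intro i j h
    exact ⟨h.1.symm, by rw [Sym2.eq_swap]; exact h.2⟩
  loopless := by constructor; intro i h; exact h.1 rfl

noncomputable def erMeasure (n : ℕ) (p : ℝ≥0∞) (h : p ≤ 1) :
    Measure (Sym2 (Fin n) → Bool) :=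
  Measure.pi fun _ =>
    (PMF.ofFintype (fun b => cond b p (1 - p)) (by simp [add_tsub_cancel_of_le h])).toMeasure

/-! A fixed `k`-set `S` dominates `G(n, p)` with probability `(1 - (1 - p) ^ k) ^ (n - k)`: each
vertex outside `S` must have a neighbour in `S`, and these events involve pairwise disjoint sets
of edges, hence are independent. For `1 - p = ε` with `ε ^ k = x := (k + δ) log n / n`, the union
bound over the `C(n, k) ≤ n ^ k` candidate sets and `1 - x ≤ exp (-x)` give the bound
`n ^ k exp (-(n - k) x) = n ^ (-δ + k (k + δ) / n) → 0`. -/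

section ProductMeasure

variable {α : Type*} [MeasurableSpace α] (μ : Measure α) [IsProbabilityMeasure μ] {A : Set α}

theorem measure_pi_exists_mem {ι : Type*} [Fintype ι] (hA : MeasurableSet A) :
    Measure.pi (fun _ : ι => μ) {σ | ∃ i, σ i ∈ A} = 1 - μ Aᶜ ^ Fintype.card ι := by
  have hcompl : {σ : ι → α | ∃ i, σ i ∈ A} = (Set.univ.pi fun _ => Aᶜ)ᶜ := by ext; simp
  rw [hcompl, prob_compl_eq_one_sub (MeasurableSet.univ_pi fun _ => hA.compl), Measure.pi_pi,
    Finset.prod_const, Finset.card_univ]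

theorem measurableSet_setOf_forall_exists_mem {ι V : Type*} (hA : MeasurableSet A)
    (E : V → Finset ι) (T : Finset V) :
    MeasurableSet {σ : ι → α | ∀ v ∈ T, ∃ e ∈ E v, σ e ∈ A} := by
  have h : {σ : ι → α | ∀ v ∈ T, ∃ e ∈ E v, σ e ∈ A} = ⋂ v ∈ T, ⋃ e ∈ E v, (· e) ⁻¹' A := by
    ext; simp
  rw [h]
  exact Finset.measurableSet_biInter T fun v _ =>
    Finset.measurableSet_biUnion (E v) fun e _ => measurable_pi_apply e hA

theorem measure_pi_forall_exists_mem {ι V : Type*} [Fintype ι] [DecidableEq V]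
    (hA : MeasurableSet A) (E : V → Finset ι) (T : Finset V)
    (hE : (T : Set V).PairwiseDisjoint E) :
    Measure.pi (fun _ : ι => μ) {σ | ∀ v ∈ T, ∃ e ∈ E v, σ e ∈ A}
      = ∏ v ∈ T, (1 - μ Aᶜ ^ (E v).card) := by
  classical
  induction T using Finset.induction_on generalizing ι with
  | empty => simp
  | @insert v₀ T hv₀ ih =>
    have hdisj : ∀ v ∈ T, Disjoint (E v) (E v₀) := fun v hv =>
      hE (by simp [hv]) (by simp) (fun h => hv₀ (h ▸ hv))
    let E' : V → Finset {i // i ∉ E v₀} := fun v => (E v).subtype (· ∉ E v₀)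
    have hcard : ∀ v ∈ T, (E' v).card = (E v).card := fun v hv => by
      rw [Finset.card_subtype, Finset.filter_true_of_mem
        fun e he => Finset.disjoint_left.mp (hdisj v hv) he]
    have hE' : (T : Set V).PairwiseDisjoint E' := fun a ha b hb hab =>
      Finset.disjoint_left.mpr fun x hxa hxb =>
        Finset.disjoint_left.mp (hE (by simp [ha]) (by simp [hb]) hab)
          (Finset.mem_subtype.mp hxa) (Finset.mem_subtype.mp hxb)
    let s : Set ({i // i ∈ E v₀} → α) := {a | ∃ j, a j ∈ A}
    let t : Set ({i // i ∉ E v₀} → α) := {b | ∀ v ∈ T, ∃ e ∈ E' v, b e ∈ A}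
    have hsplit : {σ : ι → α | ∀ v ∈ insert v₀ T, ∃ e ∈ E v, σ e ∈ A}
        = MeasurableEquiv.piEquivPiSubtypeProd (fun _ => α) (· ∈ E v₀) ⁻¹' s ×ˢ t := by
      ext σ
      simp only [Finset.forall_mem_insert, Set.mem_ofPred_eq, Set.mem_preimage, Set.mem_prod,
        s, t, E', Finset.mem_subtype, Subtype.exists]
      refine and_congr ⟨fun ⟨e, he, h⟩ => ⟨e, he, h⟩, fun ⟨e, he, h⟩ => ⟨e, he, h⟩⟩
        (forall₂_congr fun v hv => ⟨fun ⟨e, he, h⟩ => ?_, fun ⟨e, _, he, h⟩ => ⟨e, he, h⟩⟩)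
      exact ⟨e, Finset.disjoint_left.mp (hdisj v hv) he, he, h⟩
    -- the instance appearing in `measurePreserving_piEquivPiSubtypeProd`
    let _ : Fintype {i // i ∈ E v₀} := Subtype.fintype _
    have hs : MeasurableSet s := by
      simp only [s, Set.ofPred_exists]
      exact MeasurableSet.iUnion fun j => measurable_pi_apply j hA
    have ht : MeasurableSet t := measurableSet_setOf_forall_exists_mem hA E' T
    rw [hsplit, (measurePreserving_piEquivPiSubtypeProd _ _).measure_preimage
      (hs.prod ht).nullMeasurableSet, Measure.prod_prod, measure_pi_exists_mem μ hA, ih E' hE',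
      Finset.prod_insert hv₀, Finset.prod_congr rfl fun v hv => by rw [hcard v hv],
      Fintype.card_coe]

end ProductMeasure

section RandomGraph

variable {n : ℕ}

theorem dominates_graphOf_iff (σ : Sym2 (Fin n) → Bool) (S : Finset (Fin n)) :
    Dominates (graphOf σ) S ↔ ∀ v ∈ Sᶜ, ∃ e ∈ S.image (s(·, v)), σ e ∈ ({true} : Set Bool) := by
  simp only [Dominates, graphOf, Finset.mem_compl, Finset.exists_mem_image, Set.mem_singleton_iff]
  refine forall₂_congr fun v hv => exists_congr fun u =>
    and_congr_right fun hu => ⟨And.right, fun h => ⟨?_, h⟩⟩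
  rintro rfl
  exact hv hu

theorem pairwiseDisjoint_image_sym2Mk (S : Finset (Fin n)) :
    ((Sᶜ : Finset (Fin n)) : Set (Fin n)).PairwiseDisjoint (fun v => S.image (s(·, v))) := by
  intro a ha b _ hab
  simp only [Function.onFun, Finset.disjoint_left, Finset.mem_image]
  rintro _ ⟨u, hu, rfl⟩ ⟨u', hu', heq⟩
  rcases Sym2.eq_iff.mp heq with ⟨_, hba⟩ | ⟨hua, _⟩
  · exact hab hba.symm
  · simp only [Finset.coe_compl, Set.mem_compl_iff, Finset.mem_coe] at ha
    exact ha (hua ▸ hu')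

theorem card_image_sym2Mk {S : Finset (Fin n)} {v : Fin n} (hv : v ∉ S) :
    (S.image (s(·, v))).card = S.card :=
  Finset.card_image_of_injOn fun u hu u' _ heq => by
    rcases Sym2.eq_iff.mp heq with ⟨h, _⟩ | ⟨h, _⟩
    · exact h
    · exact absurd (h ▸ hu) hv

theorem erMeasure_dominates (p : ℝ≥0∞) (h : p ≤ 1) (S : Finset (Fin n)) :
    erMeasure n p h {σ | Dominates (graphOf σ) S} = (1 - (1 - p) ^ S.card) ^ (n - S.card) := by
  classical
  simp only [dominates_graphOf_iff]
  rw [erMeasure, measure_pi_forall_exists_mem _ (measurableSet_singleton _) _ _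
      (pairwiseDisjoint_image_sym2Mk S),
    Finset.prod_congr rfl fun v hv => by rw [card_image_sym2Mk (Finset.mem_compl.mp hv)],
    Finset.prod_const, Finset.card_compl, Fintype.card_fin, Bool.compl_singleton,
    PMF.toMeasure_apply_singleton _ _ (measurableSet_singleton _), PMF.ofFintype_apply]
  rfl

theorem erMeasure_exists_dominating_le (k : ℕ) (p : ℝ≥0∞) (h : p ≤ 1) :
    erMeasure n p h {σ | ∃ S : Finset (Fin n), S.card = k ∧ Dominates (graphOf σ) S}
      ≤ n.choose k * (1 - (1 - p) ^ k) ^ (n - k) := by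
  have hunion : {σ | ∃ S : Finset (Fin n), S.card = k ∧ Dominates (graphOf σ) S}
      = ⋃ S ∈ Finset.powersetCard k Finset.univ, {σ | Dominates (graphOf σ) S} := by
    ext; simp
  calc _ ≤ ∑ S ∈ Finset.powersetCard k Finset.univ,
          erMeasure n p h {σ | Dominates (graphOf σ) S} :=
        hunion ▸ measure_biUnion_finset_le _ _
    _ = n.choose k * (1 - (1 - p) ^ k) ^ (n - k) := by
        rw [Finset.sum_congr rfl fun S hS => by
            rw [erMeasure_dominates, (Finset.mem_powersetCard.mp hS).2],
          Finset.sum_const, Finset.card_powersetCard, Finset.card_univ, Fintype.card_fin,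
          nsmul_eq_mul]

theorem erMeasure_exists_dominating_le_ofReal (k : ℕ) {q : ℝ} (hq₀ : 0 ≤ q)
    (hq₁ : q ≤ 1) :
    erMeasure n (1 - ENNReal.ofReal q) tsub_le_self
        {σ | ∃ S : Finset (Fin n), S.card = k ∧ Dominates (graphOf σ) S}
      ≤ ENNReal.ofReal ((n : ℝ) ^ k * Real.exp (-((n - k : ℕ) * q ^ k))) := by
  have hqk : q ^ k ≤ 1 := pow_le_one₀ hq₀ hq₁
  calc _ ≤ n.choose k * (1 - (1 - (1 - ENNReal.ofReal q)) ^ k) ^ (n - k) :=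
        erMeasure_exists_dominating_le k _ tsub_le_self
    _ = ENNReal.ofReal (n.choose k * (1 - q ^ k) ^ (n - k)) := by
        rw [ENNReal.sub_sub_cancel ENNReal.one_ne_top (ENNReal.ofReal_le_one.mpr hq₁),
          ← ENNReal.ofReal_pow hq₀, ← ENNReal.ofReal_one, ← ENNReal.ofReal_sub _ (by positivity),
          ← ENNReal.ofReal_pow (sub_nonneg.mpr hqk), ← ENNReal.ofReal_natCast,
          ← ENNReal.ofReal_mul (Nat.cast_nonneg _)]
    _ ≤ _ := by
        refine ENNReal.ofReal_le_ofReal (mul_le_mul (mod_cast Nat.choose_le_pow n k) ?_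
          (by positivity) (by positivity))
        calc (1 - q ^ k) ^ (n - k) ≤ Real.exp (-q ^ k) ^ (n - k) :=
              pow_le_pow_left₀ (sub_nonneg.mpr hqk) (Real.one_sub_le_exp_neg _) _
          _ = Real.exp (-((n - k : ℕ) * q ^ k)) := by rw [← Real.exp_nat_mul, mul_neg]

end RandomGraph

theorem tendsto_pow_mul_exp_neg_mul_log_div {δ : ℝ} (hδ : 0 < δ) (k : ℕ) :
    Tendsto (fun n : ℕ => (n : ℝ) ^ k * Real.exp (-((n - k : ℕ) * ((k + δ) * Real.log n / n))))
      atTop (nhds 0) := by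
  have hcoef : Tendsto (fun n : ℕ => -δ + k * (k + δ) / n) atTop (nhds (-δ)) := by
    simpa using (tendsto_const_div_atTop_nhds_zero_nat ((k : ℝ) * (k + δ))).const_add (-δ)
  have hexp := Real.tendsto_exp_atBot.comp
    ((Real.tendsto_log_atTop.comp tendsto_natCast_atTop_atTop).atTop_mul_neg
      (neg_neg_iff_pos.mpr hδ) hcoef)
  refine hexp.congr' ?_
  filter_upwards [eventually_ge_atTop k, eventually_gt_atTop 0] with n hkn hn
  have hn' : (0 : ℝ) < n := Nat.cast_pos.mpr hn
  have hpow : (n : ℝ) ^ k = Real.exp (k * Real.log n) := by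
    rw [Real.exp_nat_mul, Real.exp_log hn']
  rw [Function.comp_apply, Function.comp_apply, hpow, ← Real.exp_add, Nat.cast_sub hkn]
  congr 1
  field_simp
  ring

/-- For `γ ≥ 2`, `δ > 0` and `ε_n = ((γ-1+δ)·log n / n)^(1/(γ-1))`, the
probability that `G(n, 1-ε_n)` has a dominating set of size `γ-1` tends to 0. -/
theorem stmt12 (γ : ℕ) (hγ : 2 ≤ γ) (δ : ℝ) (hδ : 0 < δ) :
    Tendsto
      (fun n : ℕ =>
        (erMeasure n
            (1 - ENNReal.ofReal
              ((((γ : ℝ) - 1 + δ) * Real.log n / n) ^ ((1 : ℝ) / ((γ : ℝ) - 1))))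
            tsub_le_self
          {σ | ∃ S : Finset (Fin n), S.card = γ - 1 ∧ Dominates (graphOf σ) S}))
      atTop (nhds 0) := by
  obtain ⟨k, rfl⟩ : ∃ k, γ = k + 1 := ⟨γ - 1, by omega⟩
  have hk : k ≠ 0 := by omega
  simp only [Nat.cast_add, Nat.cast_one, add_sub_cancel_right, Nat.add_sub_cancel, one_div]
  have hx : Tendsto (fun n : ℕ => (k + δ) * Real.log n / n) atTop (nhds 0) := by
    simpa only [mul_div_assoc, mul_zero, Function.comp_apply, id] using
      ((Real.isLittleO_log_id_atTop.tendsto_div_nhds_zero).comp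
        tendsto_natCast_atTop_atTop).const_mul ((k : ℝ) + δ)
  refine tendsto_of_tendsto_of_tendsto_of_le_of_le' tendsto_const_nhds
    (by simpa only [ENNReal.ofReal_zero] using
      ENNReal.tendsto_ofReal (tendsto_pow_mul_exp_neg_mul_log_div hδ k))
    (Eventually.of_forall fun _ => bot_le) ?_
  filter_upwards [hx.eventually (eventually_le_nhds zero_lt_one)] with n hx₁
  have hx₀ : 0 ≤ (k + δ) * Real.log n / n := by
    have := Real.log_natCast_nonneg n
    positivity
  have hε₁ : ((k + δ) * Real.log n / n) ^ (k⁻¹ : ℝ) ≤ 1 :=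
    Real.rpow_le_one hx₀ hx₁ (by positivity)
  refine (erMeasure_exists_dominating_le_ofReal k (Real.rpow_nonneg hx₀ _) hε₁).trans_eq ?_
  rw [Real.rpow_inv_natCast_pow hx₀ hk]
end

section
/- Fix γ ≥ 3. For all sufficiently large n there exists a graph G on n vertices with domination number exactly γ such that the number of dominating sets of size γ is at least C(n,γ) − C·log^γ n · n^{γ − 1/(γ−1)} for some absolute constant C depending only on γ. -/
open Filter

/-! Write `γ = k + 1`. Take a prime `p` with `n ≤ p ^ k ≤ 4 ^ k n`, embed the vertices into
`𝔽_p^k`, and give every affine hyperplane of `𝔽_p^k` (there are about `k p^k`, i.e. `O(n)`, of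
them) `γ` owners, spreading the ownership evenly so that each vertex owns `O(1)` hyperplanes.
Let `H` join an owner to every point of the hyperplanes it owns, and put `G = Hᶜ`. A set `S`
fails to dominate `G` iff some `v ∉ S` has `S ⊆ N_H(v)`. Any `k` points lie on a common
hyperplane, which has an owner outside `S`, so no set of fewer than `γ` vertices dominates.
On the other hand `H` has maximum degree `O(p^(k-1)) = O(n^(1-1/k))`, so at most
`n · O(n^(1-1/k))^γ = O(n^(γ-1/k))` sets of size `γ` fail to dominate; for large `n` this is
less than `C(n, γ)`, so `γ(G) = γ`.
-/

open Finset Function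
open scoped Classical Nat

section Domination

variable {V : Type*}

lemma not_dominates_compl_iff (H : SimpleGraph V) (S : Finset V) :
    ¬Dominates Hᶜ S ↔ ∃ v ∉ S, ∀ u ∈ S, H.Adj u v := by
  simp only [Dominates, SimpleGraph.compl_adj, not_forall, not_exists, not_and, not_not]
  refine exists_congr fun v =>
    ⟨fun ⟨hv, h⟩ => ⟨hv, fun u hu => h u hu (ne_of_mem_of_not_mem hu hv)⟩,
      fun ⟨hv, h⟩ => ⟨hv, fun u hu _ => h u hu⟩⟩

variable [Fintype V]

lemma domCount_add_card_not_dominates (G : SimpleGraph V) (k : ℕ) :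
    domCount G k + #{S ∈ powersetCard k univ | ¬Dominates G S} = (Fintype.card V).choose k := by
  rw [domCount, card_filter_add_card_filter_not, card_powersetCard, card_univ]

lemma domNum_eq_of_domCount_pos (G : SimpleGraph V) {k : ℕ}
    (hsmall : ∀ S : Finset V, #S < k → ¬Dominates G S) (hpos : 0 < domCount G k) :
    domNum G = k := by
  obtain ⟨S, hS⟩ := card_pos.mp hpos
  rw [mem_filter, mem_powersetCard_univ] at hS
  refine le_antisymm (Nat.sInf_le ⟨S, hS⟩) (le_csInf ⟨k, S, hS⟩ ?_)
  rintro m ⟨T, rfl, hT⟩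
  exact not_lt.mp fun h => hsmall T h hT

lemma card_not_dominates_compl_le (H : SimpleGraph V) (k : ℕ) {Δ : ℕ}
    (hΔ : ∀ v, H.degree v ≤ Δ) :
    #{S ∈ powersetCard k univ | ¬Dominates Hᶜ S} ≤ Fintype.card V * Δ ^ k := by
  calc #{S ∈ powersetCard k univ | ¬Dominates Hᶜ S}
      ≤ #(univ.biUnion fun v => powersetCard k (H.neighborFinset v)) := by
        refine card_le_card fun S hS => ?_
        obtain ⟨hSk, hS⟩ := mem_filter.mp hS
        obtain ⟨v, -, hv⟩ := (not_dominates_compl_iff H S).mp hS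
        exact mem_biUnion.mpr ⟨v, mem_univ v, mem_powersetCard.mpr
          ⟨fun u hu => (H.mem_neighborFinset v u).mpr (hv u hu).symm,
            (mem_powersetCard_univ.mp hSk)⟩⟩
    _ ≤ ∑ v, #(powersetCard k (H.neighborFinset v)) := card_biUnion_le
    _ ≤ ∑ _v : V, Δ ^ k := sum_le_sum fun v _ => by
        rw [card_powersetCard, H.card_neighborFinset_eq_degree]
        exact (Nat.choose_le_pow _ _).trans (Nat.pow_le_pow_left (hΔ v) k)
    _ = Fintype.card V * Δ ^ k := by rw [sum_const, card_univ, smul_eq_mul]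

end Domination

section OwnerGraph

variable {V ι : Type*} {γ : ℕ}

def ownerGraph (block : ι → Finset V) (owner : ι × Fin γ → V) : SimpleGraph V :=
  SimpleGraph.fromRel fun u v => ∃ a, owner a = u ∧ v ∈ block a.1

lemma ownerGraph_adj {block : ι → Finset V} {owner : ι × Fin γ → V} {u v : V} :
    (ownerGraph block owner).Adj u v ↔
      u ≠ v ∧
        ((∃ a, owner a = u ∧ v ∈ block a.1) ∨ ∃ a, owner a = v ∧ u ∈ block a.1) :=
  SimpleGraph.fromRel_adj _ _ _

lemma exists_forall_ownerGraph_adj (block : ι → Finset V) (owner : ι × Fin γ → V)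
    (howner : ∀ i, Injective fun j => owner (i, j)) {S : Finset V} (hS : #S < γ) {i : ι}
    (hSi : S ⊆ block i) : ∃ v ∉ S, ∀ u ∈ S, (ownerGraph block owner).Adj u v := by
  obtain ⟨j, hj⟩ : ∃ j, owner (i, j) ∉ S := by
    by_contra! h
    have := card_le_card_of_injOn _ (fun j _ => h j) (howner i).injOn (s := univ)
    simp only [card_univ, Fintype.card_fin] at this
    omega
  exact ⟨owner (i, j), hj, fun u hu =>
    ownerGraph_adj.mpr ⟨ne_of_mem_of_not_mem hu hj, .inr ⟨(i, j), rfl, hSi hu⟩⟩⟩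

variable [Fintype V] [DecidableEq V] [Fintype ι]

lemma degree_ownerGraph_le (block : ι → Finset V) (owner : ι × Fin γ → V) {t : ℕ}
    (ht : ∀ i, #(block i) ≤ t) (v : V) :
    (ownerGraph block owner).degree v ≤ γ * #{i | v ∈ block i} + #{a | owner a = v} * t := by
  have hsub : (ownerGraph block owner).neighborFinset v ⊆
      ({a | v ∈ block a.1} : Finset (ι × Fin γ)).image owner ∪
        ({a | owner a = v} : Finset (ι × Fin γ)).biUnion fun a => block a.1 := by
    intro u hu
    obtain ⟨-, ⟨a, hav, hua⟩ | ⟨a, hau, hva⟩⟩ :=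
      ownerGraph_adj.mp ((SimpleGraph.mem_neighborFinset _ _ _).mp hu)
    · exact mem_union_right _ (mem_biUnion.mpr ⟨a, mem_filter.mpr ⟨mem_univ _, hav⟩, hua⟩)
    · exact mem_union_left _ (mem_image.mpr ⟨a, mem_filter.mpr ⟨mem_univ _, hva⟩, hau⟩)
  have hprod : ({a | v ∈ block a.1} : Finset (ι × Fin γ)) =
      ({i | v ∈ block i} : Finset ι) ×ˢ univ := by
    ext; simp
  rw [← SimpleGraph.card_neighborFinset_eq_degree]
  calc _ ≤ _ := card_le_card hsub
    _ ≤ _ := card_union_le _ _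
    _ ≤ #{i | v ∈ block i} * γ + #{a | owner a = v} * t := by
        gcongr
        · exact card_image_le.trans (by rw [hprod, card_product, card_univ, Fintype.card_fin])
        · exact card_biUnion_le_card_mul _ _ _ fun a _ => ht a.1
    _ = _ := by ring

end OwnerGraph

lemma card_le_pow_of_injOn_restrict_compl {ι α : Type*} [Fintype ι] [Fintype α]
    (s : Finset (ι → α)) (j : ι)
    (hs : Set.InjOn (fun (x : ι → α) (i : {i // i ≠ j}) => x i) s) :
    #s ≤ Fintype.card α ^ (Fintype.card ι - 1) := by
  calc #s ≤ #(univ : Finset ({i // i ≠ j} → α)) :=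
        card_le_card_of_injOn _ (fun _ _ => mem_univ _) hs
    _ = Fintype.card α ^ (Fintype.card ι - 1) := by
        rw [card_univ, Fintype.card_fun, Fintype.card_subtype_compl, Fintype.card_subtype_eq]

lemma exists_ne_zero_dotProduct_eq {ι F : Type*} [Fintype ι] [Field F] (S : Finset (ι → F))
    (hS : #S ≤ Fintype.card ι) (hne : S.Nonempty) :
    ∃ a : ι → F, a ≠ 0 ∧ ∃ b, ∀ x ∈ S, a ⬝ᵥ x = b := by
  let T : (ι → F) × F →ₗ[F] (S → F) :=
    { toFun := fun ab x => ab.1 ⬝ᵥ x - ab.2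
      map_add' := fun _ _ => by
        ext
        simp only [Prod.fst_add, Prod.snd_add, add_dotProduct, Pi.add_apply]
        ring
      map_smul' := fun _ _ => by
        ext
        simp [smul_dotProduct, mul_sub] }
  have hker : LinearMap.ker T ≠ ⊥ := LinearMap.ker_ne_bot_of_finrank_lt (by simpa using hS)
  obtain ⟨⟨a, b⟩, hab, hne0⟩ := (Submodule.ne_bot_iff _).mp hker
  have heq : ∀ x ∈ S, a ⬝ᵥ x = b := fun x hx =>
    sub_eq_zero.mp (congrFun (LinearMap.mem_ker.mp hab) ⟨x, hx⟩)
  refine ⟨a, fun ha => hne0 ?_, b, heq⟩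
  obtain ⟨x, hx⟩ := hne
  simp [ha, ← heq x hx]

section Hyperplane

variable {F : Type*} [Field F] [Fintype F] {k : ℕ}

/-- The pair `(j, c)` encodes the affine hyperplane `x j = c j + ∑_{i ≠ j} c i * x i`, with
`c j` playing the role of the constant term; every affine hyperplane has such a description. -/
noncomputable def hyperplane (a : Fin k × (Fin k → F)) : Finset (Fin k → F) :=
  {x | x a.1 = a.2 a.1 + ∑ i ∈ univ.erase a.1, a.2 i * x i}

lemma card_hyperplane_le (a : Fin k × (Fin k → F)) :
    #(hyperplane a) ≤ Fintype.card F ^ (k - 1) := by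
  refine (card_le_pow_of_injOn_restrict_compl _ a.1 fun x hx y hy hxy => ?_).trans_eq (by simp)
  have hoff : ∀ i ≠ a.1, x i = y i := fun i hi => congrFun hxy ⟨i, hi⟩
  simp only [hyperplane, coe_filter, mem_univ, true_and, Set.mem_ofPred_eq] at hx hy
  funext i
  by_cases hi : i = a.1
  · subst hi
    rw [hx, hy, sum_congr rfl fun i hi => by rw [hoff i (ne_of_mem_erase hi)]]
  · exact hoff i hi

lemma card_filter_mem_hyperplane_le (x : Fin k → F) :
    #{a | x ∈ hyperplane a} ≤ k * Fintype.card F ^ (k - 1) := by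
  have hj : ∀ j, #{c | x ∈ hyperplane (j, c)} ≤ Fintype.card F ^ (k - 1) := fun j => by
    refine (card_le_pow_of_injOn_restrict_compl _ j fun c hc d hd hcd => ?_).trans_eq (by simp)
    have hoff : ∀ i ≠ j, c i = d i := fun i hi => congrFun hcd ⟨i, hi⟩
    simp only [hyperplane, coe_filter, mem_univ, true_and, Set.mem_ofPred_eq, mem_filter] at hc hd
    funext i
    by_cases hi : i = j
    · subst hi
      rw [sum_congr rfl fun i hi => by rw [hoff i (ne_of_mem_erase hi)]] at hc
      exact add_right_cancel (hc.symm.trans hd)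
    · exact hoff i hi
  calc #{a | x ∈ hyperplane a} = ∑ j, #{c | x ∈ hyperplane (j, c)} := by
        simp only [card_filter, Fintype.sum_prod_type]
    _ ≤ ∑ _j : Fin k, Fintype.card F ^ (k - 1) := sum_le_sum fun j _ => hj j
    _ = k * Fintype.card F ^ (k - 1) := by simp

lemma mem_hyperplane_of_dotProduct_eq {a x : Fin k → F} {b : F} {j : Fin k} (hj : a j ≠ 0)
    (hx : a ⬝ᵥ x = b) :
    x ∈ hyperplane (j, fun i => if i = j then b / a j else -(a i / a j)) := by
  rw [dotProduct, ← add_sum_erase _ _ (mem_univ j)] at hx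
  simp only [hyperplane, mem_filter, mem_univ, true_and, if_pos]
  have hsum : ∑ i ∈ univ.erase j, -(a i / a j) * x i =
      -(∑ i ∈ univ.erase j, a i * x i) / a j := by
    rw [neg_div, sum_div, ← sum_neg_distrib]
    exact sum_congr rfl fun i _ => by ring
  rw [sum_congr rfl fun i hi => by rw [if_neg (ne_of_mem_erase hi)], hsum, ← hx]
  field_simp
  ring

lemma exists_subset_hyperplane (hk : 0 < k) (S : Finset (Fin k → F)) (hS : #S ≤ k) :
    ∃ a, S ⊆ hyperplane a := by
  rcases S.eq_empty_or_nonempty with rfl | hne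
  · exact ⟨(⟨0, hk⟩, 0), empty_subset _⟩
  obtain ⟨a, ha, b, hab⟩ := exists_ne_zero_dotProduct_eq S (by simpa using hS) hne
  obtain ⟨j, hj⟩ := Function.ne_iff.mp ha
  exact ⟨_, fun x hx => mem_hyperplane_of_dotProduct_eq hj (hab x hx)⟩

end Hyperplane

section CyclicOwner

variable {ι : Type*} [Fintype ι] {γ : ℕ} (n : ℕ) [NeZero n]

/-- The `j`-th owner of the `m`-th block is the vertex `(γ m + j) mod n`. -/
noncomputable def cyclicOwner (a : ι × Fin γ) : Fin n :=
  Fin.ofNat n (((Fintype.equivFin ι).prodCongr (.refl _)).trans finProdFinEquiv a)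

lemma cyclicOwner_injective (hγ : γ ≤ n) (i : ι) :
    Injective fun j : Fin γ => cyclicOwner n (i, j) := by
  intro j j' h
  have hmod : (j : ℕ) ≡ j' [MOD n] := by
    have := congrArg Fin.val h
    simp only [cyclicOwner, Fin.val_ofNat, Equiv.trans_apply, Equiv.prodCongr_apply,
      Prod.map, Equiv.refl_apply, finProdFinEquiv_apply_val] at this
    exact Nat.ModEq.add_right_cancel' _ this
  exact Fin.ext (hmod.eq_of_lt_of_lt (j.2.trans_le hγ) (j'.2.trans_le hγ))

lemma card_filter_cyclicOwner_eq_le (v : Fin n) :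
    #{a : ι × Fin γ | cyclicOwner n a = v} ≤ Fintype.card ι * γ / n + 1 := by
  calc #{a : ι × Fin γ | cyclicOwner n a = v}
      ≤ #{s ∈ range (Fintype.card ι * γ) | s ≡ v [MOD n]} := by
        refine card_le_card_of_injOn
          (fun a => ((Fintype.equivFin ι).prodCongr (.refl _)).trans finProdFinEquiv a)
          (fun a ha => ?_) fun a _ b _ hab => (Equiv.injective _) (Fin.ext hab)
        rw [mem_coe, mem_filter] at ha ⊢
        refine ⟨mem_range.mpr (Fin.is_lt _), ?_⟩
        rw [Nat.ModEq, ← ha.2, cyclicOwner, Fin.val_ofNat, Nat.mod_mod]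
    _ = Nat.count (· ≡ v [MOD n]) (Fintype.card ι * γ) :=
        (Nat.count_eq_card_filter_range _ _).symm
    _ ≤ Fintype.card ι * γ / n + 1 := by
        rw [Nat.count_modEq_card _ (Nat.pos_of_neZero n)]
        split_ifs <;> omega

end CyclicOwner

section HyperplaneOwnerGraph

variable {F : Type*} [Field F] [Fintype F] {k n : ℕ} [NeZero n]

noncomputable def hyperplaneOwnerGraph (e : Fin n ↪ (Fin k → F)) : SimpleGraph (Fin n) :=
  ownerGraph (fun a => {u | e u ∈ hyperplane a}) (cyclicOwner n (γ := k + 1))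

lemma not_dominates_compl_hyperplaneOwnerGraph (hk : 0 < k) (hn : k + 1 ≤ n)
    (e : Fin n ↪ (Fin k → F)) {S : Finset (Fin n)} (hS : #S ≤ k) :
    ¬Dominates (hyperplaneOwnerGraph e)ᶜ S := by
  obtain ⟨a, ha⟩ := exists_subset_hyperplane hk (S.map e) (by simpa using hS)
  rw [not_dominates_compl_iff]
  exact exists_forall_ownerGraph_adj _ _ (cyclicOwner_injective n hn) (by omega) (i := a)
    fun u hu => mem_filter.mpr ⟨mem_univ _, ha (mem_map_of_mem e hu)⟩

lemma degree_hyperplaneOwnerGraph_le (e : Fin n ↪ (Fin k → F))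
    (hF : Fintype.card F ^ k ≤ 4 ^ k * n) (v : Fin n) :
    (hyperplaneOwnerGraph e).degree v ≤
      ((k + 1) * k + (k + 1) * k * 4 ^ k + 1) * Fintype.card F ^ (k - 1) := by
  have hblock (a : Fin k × (Fin k → F)) :
      #{u | e u ∈ hyperplane a} ≤ Fintype.card F ^ (k - 1) :=
    (card_le_card_of_injOn e (fun u hu => (mem_filter.mp hu).2) e.injective.injOn).trans
      (card_hyperplane_le a)
  have hthrough : #{a | v ∈ ({u | e u ∈ hyperplane a} : Finset (Fin n))} ≤
      k * Fintype.card F ^ (k - 1) := by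
    simpa using card_filter_mem_hyperplane_le (e v)
  have howned : #{a : (Fin k × (Fin k → F)) × Fin (k + 1) | cyclicOwner n a = v} ≤
      (k + 1) * k * 4 ^ k + 1 := by
    refine (card_filter_cyclicOwner_eq_le n v).trans (Nat.add_le_add_right ?_ 1)
    refine Nat.div_le_of_le_mul ?_
    calc Fintype.card (Fin k × (Fin k → F)) * (k + 1) = (k + 1) * k * Fintype.card F ^ k := by
          simp only [Fintype.card_prod, Fintype.card_fin, Fintype.card_fun]; ring
      _ ≤ (k + 1) * k * (4 ^ k * n) := by gcongr
      _ = n * ((k + 1) * k * 4 ^ k) := by ring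
  calc (hyperplaneOwnerGraph e).degree v
      ≤ (k + 1) * (k * Fintype.card F ^ (k - 1)) +
          ((k + 1) * k * 4 ^ k + 1) * Fintype.card F ^ (k - 1) := by
        refine (degree_ownerGraph_le _ _ hblock v).trans ?_
        gcongr
    _ = ((k + 1) * k + (k + 1) * k * 4 ^ k + 1) * Fintype.card F ^ (k - 1) := by ring

end HyperplaneOwnerGraph

lemma exists_prime_pow_mem_Icc {k n : ℕ} (hk : 0 < k) (hn : 0 < n) :
    ∃ p, p.Prime ∧ n ≤ p ^ k ∧ p ^ k ≤ 4 ^ k * n := by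
  have hex : ∃ m, n ≤ m ^ k := ⟨n, Nat.le_self_pow hk.ne' n⟩
  set m := Nat.find hex
  have hm : 0 < m := (Nat.find_pos hex).mpr (by rw [zero_pow hk.ne']; omega)
  obtain ⟨p, hp, hmp, hp2m⟩ := Nat.exists_prime_lt_and_le_two_mul m hm.ne'
  refine ⟨p, hp, (Nat.find_spec hex).trans (Nat.pow_le_pow_left hmp.le k), ?_⟩
  have hm2 : m ^ k ≤ 2 ^ k * n := by
    rcases Nat.lt_or_ge m 2 with h | h
    · rw [show m = 1 by omega, one_pow]
      exact Nat.mul_pos (by positivity) hn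
    · have hmin : (m - 1) ^ k < n := not_le.mp (Nat.find_min hex (by omega))
      calc m ^ k ≤ (2 * (m - 1)) ^ k := Nat.pow_le_pow_left (by omega) k
        _ ≤ 2 ^ k * n := by rw [mul_pow]; gcongr
  calc p ^ k ≤ (2 * m) ^ k := Nat.pow_le_pow_left hp2m k
    _ ≤ 2 ^ k * (2 ^ k * n) := by rw [mul_pow]; gcongr
    _ = 4 ^ k * n := by rw [← mul_assoc, ← mul_pow]; norm_num

lemma pow_mul_le_of_le_mul_pow {b n q D k : ℕ} (hk : 0 < k) (hq : q ^ k ≤ 4 ^ k * n)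
    (hb : b ≤ n * (D * q ^ (k - 1)) ^ (k + 1)) :
    b ^ k * n ≤ (D ^ (k + 1) * 4 ^ ((k - 1) * (k + 1))) ^ k * n ^ (k * (k + 1)) := by
  obtain ⟨m, rfl⟩ : ∃ m, k = m + 1 := ⟨k - 1, by omega⟩
  simp only [Nat.add_sub_cancel] at hb ⊢
  calc b ^ (m + 1) * n ≤ (n * (D * q ^ m) ^ (m + 1 + 1)) ^ (m + 1) * n := by gcongr
    _ = n ^ (m + 2) * D ^ ((m + 1) * (m + 2)) * ((q ^ (m + 1)) ^ m) ^ (m + 2) := by ring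
    _ ≤ n ^ (m + 2) * D ^ ((m + 1) * (m + 2)) * ((4 ^ (m + 1) * n) ^ m) ^ (m + 2) := by gcongr
    _ = _ := by ring

theorem exists_graph_card_not_dominates_pow_mul_le {k : ℕ} (hk : 0 < k) :
    ∃ C : ℕ, ∀ n, k + 1 ≤ n → ∃ G : SimpleGraph (Fin n),
      (∀ S : Finset (Fin n), #S ≤ k → ¬Dominates G S) ∧
        #{S ∈ powersetCard (k + 1) univ | ¬Dominates G S} ^ k * n ≤ C * n ^ (k * (k + 1)) := by
  refine ⟨(((k + 1) * k + (k + 1) * k * 4 ^ k + 1) ^ (k + 1) * 4 ^ ((k - 1) * (k + 1))) ^ k,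
    fun n hn => ?_⟩
  have : NeZero n := ⟨by omega⟩
  obtain ⟨p, hp, hnp, hp4⟩ := exists_prime_pow_mem_Icc hk (by omega : 0 < n)
  have : Fact p.Prime := ⟨hp⟩
  have hF : Fintype.card (ZMod p) = p := ZMod.card p
  obtain ⟨e⟩ : Nonempty (Fin n ↪ (Fin k → ZMod p)) :=
    Function.Embedding.nonempty_of_card_le (by simpa [hF] using hnp)
  refine ⟨(hyperplaneOwnerGraph e)ᶜ,
    fun S hS => not_dominates_compl_hyperplaneOwnerGraph hk hn e hS, ?_⟩
  refine pow_mul_le_of_le_mul_pow hk hp4 ?_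
  simpa [hF] using card_not_dominates_compl_le _ (k + 1)
    (degree_hyperplaneOwnerGraph_le e (by simpa [hF] using hp4))

lemma pow_le_two_pow_mul_factorial_mul_choose {n r : ℕ} (h : 2 * r ≤ n) :
    n ^ r ≤ 2 ^ r * r ! * n.choose r := by
  calc n ^ r ≤ (2 * (n + 1 - r)) ^ r := Nat.pow_le_pow_left (by omega) r
    _ ≤ 2 ^ r * n.descFactorial r := by
        rw [mul_pow]
        exact Nat.mul_le_mul_left _ (Nat.pow_sub_le_descFactorial n r)
    _ = 2 ^ r * r ! * n.choose r := by rw [Nat.descFactorial_eq_factorial_mul_choose, mul_assoc]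

lemma lt_choose_of_pow_mul_le {b n r k C : ℕ} (hr : 2 * r ≤ n)
    (hb : b ^ k * n ≤ C * n ^ (k * r)) (hn : (2 ^ r * r !) ^ k * C < n) : b < n.choose r := by
  by_contra! hcb
  have hpos : 0 < n ^ (k * r) := pow_pos (by omega) _
  have := calc n * n ^ (k * r) = (n ^ r) ^ k * n := by ring
    _ ≤ (2 ^ r * r ! * b) ^ k * n := by
        gcongr; exact (pow_le_two_pow_mul_factorial_mul_choose hr).trans (by gcongr)
    _ = (2 ^ r * r !) ^ k * (b ^ k * n) := by ring
    _ ≤ (2 ^ r * r !) ^ k * C * n ^ (k * r) := by rw [mul_assoc]; gcongr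
  exact (Nat.mul_lt_mul_of_pos_right hn hpos).not_ge this

lemma le_rpow_of_pow_mul_le {b n k C : ℕ} (hk : 0 < k) (hn : 0 < n)
    (hb : b ^ k * n ≤ C * n ^ (k * (k + 1))) :
    (b : ℝ) ≤ (C : ℝ) ^ (k : ℝ)⁻¹ * (n : ℝ) ^ ((k : ℝ) + 1 - (k : ℝ)⁻¹) := by
  have hnR : (0 : ℝ) < n := by exact_mod_cast hn
  have hrhs : ((C : ℝ) ^ (k : ℝ)⁻¹ * (n : ℝ) ^ ((k : ℝ) + 1 - (k : ℝ)⁻¹)) ^ k =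
      C * (n : ℝ) ^ (k * (k + 1)) / n := by
    rw [mul_pow, Real.rpow_inv_natCast_pow (by positivity) hk.ne', ← Real.rpow_mul_natCast hnR.le,
      show ((k : ℝ) + 1 - (k : ℝ)⁻¹) * k = ((k * (k + 1) : ℕ) : ℝ) - 1 by
        push_cast; field_simp,
      Real.rpow_sub_one hnR.ne', Real.rpow_natCast, mul_div_assoc]
  refine le_of_pow_le_pow_left₀ hk.ne' (by positivity) ?_
  rw [hrhs, le_div_iff₀ hnR]
  exact_mod_cast hb

/-- For fixed `γ ≥ 3` and all large `n` there is a graph on `n` vertices with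
domination number exactly `γ` whose number of dominating `γ`-sets is at least
`C(n,γ) - C·log^γ n · n^(γ-1/(γ-1))`. -/
theorem stmt17 (γ : ℕ) (hγ : 3 ≤ γ) :
    ∃ C : ℝ, ∃ N : ℕ, ∀ n : ℕ, N ≤ n →
      ∃ G : SimpleGraph (Fin n), domNum G = γ ∧
        (Nat.choose n γ : ℝ) -
            C * Real.log n ^ γ * (n : ℝ) ^ ((γ : ℝ) - 1 / ((γ : ℝ) - 1)) ≤
          (domCount G γ : ℝ) := by
  obtain ⟨k, rfl⟩ : ∃ k, γ = k + 1 := ⟨γ - 1, by omega⟩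
  have hk : 0 < k := by omega
  obtain ⟨C, hC⟩ := exists_graph_card_not_dominates_pow_mul_le hk
  refine ⟨(C : ℝ) ^ (k : ℝ)⁻¹, 3 + 2 * (k + 1) + (2 ^ (k + 1) * (k + 1)!) ^ k * C,
    fun n hn => ?_⟩
  obtain ⟨G, hsmall, hbad⟩ := hC n (by omega)
  set bad := #{S ∈ powersetCard (k + 1) univ | ¬Dominates G S}
  have hsplit := domCount_add_card_not_dominates G (k + 1)
  rw [Fintype.card_fin] at hsplit
  have hbad_lt := lt_choose_of_pow_mul_le (by omega) hbad (by omega)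
  refine ⟨G, domNum_eq_of_domCount_pos G (fun S hS => hsmall S (by omega)) (by omega), ?_⟩
  have hbadR := le_rpow_of_pow_mul_le hk (by omega) hbad
  have hn3 : (3 : ℝ) ≤ n := by exact_mod_cast (by omega : 3 ≤ n)
  have hlog : 1 ≤ Real.log n ^ (k + 1) := one_le_pow₀ <| by
    rw [Real.le_log_iff_exp_le (by linarith)]
    linarith [Real.exp_one_lt_d9]
  have hexp :
      ((k + 1 : ℕ) : ℝ) - 1 / (((k + 1 : ℕ) : ℝ) - 1) = (k : ℝ) + 1 - (k : ℝ)⁻¹ := by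
    push_cast; ring
  have hsplitR : (domCount G (k + 1) : ℝ) + bad = n.choose (k + 1) := by exact_mod_cast hsplit
  have hP : (0 : ℝ) ≤ (C : ℝ) ^ (k : ℝ)⁻¹ * (n : ℝ) ^ ((k : ℝ) + 1 - (k : ℝ)⁻¹) := by
    positivity
  rw [hexp]
  linarith [mul_le_mul_of_nonneg_left hlog hP]
end
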